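/- Let Γ be a finitely generated group and γ_1, γ_2 ∈ Γ. Then the following are equivalent: (i) γ_1 and γ_2 induce the same measure on every finite group, i.e., for every finite group G and every g ∈ G, the number of homomorphisms φ : Γ → G with φ(γ_1) = g equals the number with φ(γ_2) = g; (ii) for every finite group G, writing K = K_Γ(G), there is an automorphism of Γ/K mapping γ_1K to γ_2K. -/

import Mathlib

/-- `Kgrp Γ G` is the intersection of all normal subgroups `N ◁ Γ` with `Γ/N ≅ G`
(equivalently, of the kernels of all surjective homomorphisms `Γ →* G`); it equals
`Γ` if `G` is not a quotient of `Γ`. -/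
def Kgrp (Γ : Type) [Group Γ] (G : Type) [Group G] : Subgroup Γ :=
  ⨅ (φ : Γ →* G) (_ : Function.Surjective φ), φ.ker

instance Kgrp_normal (Γ : Type) [Group Γ] (G : Type) [Group G] : (Kgrp Γ G).Normal := by
  constructor
  intro n hn g
  simp only [Kgrp, Subgroup.mem_iInf] at hn ⊢
  intro φ hφ
  have h1 := hn φ hφ
  simp only [MonoidHom.mem_ker] at h1 ⊢
  simp [map_mul, h1]

/-!
Sort the homomorphisms `Γ → G` by their image `H ≤ G`: the number of those sending `γ` to `g`
is the sum over the subgroups `H ∋ g` of the number of surjections `Γ ↠ H` sending `γ` to `g`.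
By induction on `|G|`, equal homomorphism counts for `γ₁, γ₂` are therefore the same as equal
surjection counts. Every surjection `Γ ↠ G` factors through `Q = Γ/K_Γ(G)`, so an automorphism of
`Q` carrying `γ₁K` to `γ₂K` permutes these surjections and matches the counts. Conversely, if the
surjection counts agree for `Q` itself, the projection `Γ ↠ Q` (which sends `γ₂` to `γ₂K`) has a
partner `ρ : Γ ↠ Q` with `ρ γ₁ = γ₂K`. It kills `K_Γ(G)`, since composed with the map `Q ↠ G`
induced by any `φ : Γ ↠ G` it is again a surjection `Γ ↠ G`; so `ρ` induces a surjective, hence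
bijective, endomorphism of the finite group `Q`.
-/

open Function

section SurjectionCounts

variable {Γ : Type} [Group Γ]

def SameSurjMeasure {Q : Type} [Group Q] (q₁ q₂ : Q) (G : Type) [Group G] : Prop :=
  ∀ g : G, Nat.card {φ : Q →* G // φ q₁ = g ∧ Surjective φ} =
    Nat.card {φ : Q →* G // φ q₂ = g ∧ Surjective φ}

lemma finite_monoidHom_of_fg [Group.FG Γ] (G : Type) [Group G] [Finite G] :
    Finite (Γ →* G) := by
  obtain ⟨S, hS, hSfin⟩ := Group.fg_iff.mp ‹Group.FG Γ›
  have : Finite S := hSfin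
  refine Finite.of_injective (fun φ : Γ →* G => fun s : S => φ s) fun φ ψ h => ?_
  exact MonoidHom.eq_of_eqOn_dense hS fun x hx => congrFun h ⟨x, hx⟩

def rangeEqEquivSurjective {G : Type} [Group G] (H : Subgroup G) (γ : Γ) (h : H) :
    {φ : Γ →* G // φ γ = h ∧ φ.range = H} ≃ {ψ : Γ →* H // ψ γ = h ∧ Surjective ψ} where
  toFun φ := ⟨φ.1.codRestrict H (fun x => φ.2.2.le ⟨x, rfl⟩), Subtype.ext φ.2.1, by
    rintro ⟨y, hy⟩
    rw [← φ.2.2] at hy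
    obtain ⟨x, rfl⟩ := hy
    exact ⟨x, rfl⟩⟩
  invFun ψ := ⟨H.subtype.comp ψ.1, congrArg Subtype.val ψ.2.1, by
    rw [MonoidHom.range_comp, MonoidHom.range_eq_top.mpr ψ.2.2, ← MonoidHom.range_eq_map,
      Subgroup.range_subtype]⟩
  left_inv _ := rfl
  right_inv _ := rfl

lemma card_eq_sum_card_range_eq [Group.FG Γ] (G : Type) [Group G] [Finite G]
    [Fintype (Subgroup G)] (γ : Γ) (g : G) :
    Nat.card {φ : Γ →* G // φ γ = g} =
      ∑ H : Subgroup G, Nat.card {φ : Γ →* G // φ γ = g ∧ φ.range = H} := by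
  have := finite_monoidHom_of_fg (Γ := Γ) G
  rw [← Nat.card_sigma, Nat.card_congr
    ((Equiv.sigmaFiberEquiv fun φ : {φ : Γ →* G // φ γ = g} => φ.1.range).symm.trans
      (Equiv.sigmaCongrRight fun H =>
        Equiv.subtypeSubtypeEquivSubtypeInter (fun φ : Γ →* G => φ γ = g) (·.range = H)))]

lemma card_range_eq_eq_of_sameSurjMeasure {γ₁ γ₂ : Γ} {G : Type} [Group G] {H : Subgroup G}
    (hH : SameSurjMeasure γ₁ γ₂ H) (g : G) :
    Nat.card {φ : Γ →* G // φ γ₁ = g ∧ φ.range = H} =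
      Nat.card {φ : Γ →* G // φ γ₂ = g ∧ φ.range = H} := by
  by_cases hg : g ∈ H
  · rw [Nat.card_congr (rangeEqEquivSurjective H γ₁ ⟨g, hg⟩),
      Nat.card_congr (rangeEqEquivSurjective H γ₂ ⟨g, hg⟩)]
    exact hH ⟨g, hg⟩
  · have (γ : Γ) : IsEmpty {φ : Γ →* G // φ γ = g ∧ φ.range = H} :=
      ⟨fun φ => hg (φ.2.2.le ⟨γ, φ.2.1⟩)⟩
    simp only [Nat.card_of_isEmpty]

lemma sameHomMeasure_iff_sameSurjMeasure [Group.FG Γ] (γ₁ γ₂ : Γ) :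
    (∀ (G : Type) [Group G] [Finite G] (g : G),
        Nat.card {φ : Γ →* G // φ γ₁ = g} = Nat.card {φ : Γ →* G // φ γ₂ = g}) ↔
      ∀ (G : Type) [Group G] [Finite G], SameSurjMeasure γ₁ γ₂ G := by
  classical
  constructor
  · intro hyp G _ _
    induction hn : Nat.card G using Nat.strong_induction_on generalizing G with | _ n ih =>
    intro g
    have := Fintype.ofFinite (Subgroup G)
    have hproper (H : Subgroup G) (hH : H ∈ ({⊤}ᶜ : Finset (Subgroup G))) :
        Nat.card {φ : Γ →* G // φ γ₁ = g ∧ φ.range = H} =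
          Nat.card {φ : Γ →* G // φ γ₂ = g ∧ φ.range = H} := by
      have hlt : Nat.card H < n := hn ▸ lt_of_le_of_ne H.card_le_card_group
        fun h => by simp [Subgroup.eq_top_of_card_eq H h] at hH
      exact card_range_eq_eq_of_sameSurjMeasure (ih _ hlt H rfl) g
    have hsum := hyp G g
    rw [card_eq_sum_card_range_eq, card_eq_sum_card_range_eq, Fintype.sum_eq_add_sum_compl ⊤,
      Fintype.sum_eq_add_sum_compl ⊤, Finset.sum_congr rfl hproper] at hsum
    simpa only [MonoidHom.range_eq_top] using Nat.add_right_cancel hsum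
  · intro hyp G _ _ g
    have := Fintype.ofFinite (Subgroup G)
    rw [card_eq_sum_card_range_eq, card_eq_sum_card_range_eq]
    exact Finset.sum_congr rfl fun H _ => card_range_eq_eq_of_sameSurjMeasure (hyp H) g

end SurjectionCounts

section CharacteristicQuotient

variable {Γ G : Type} [Group Γ] [Group G]

lemma Kgrp_le_ker {φ : Γ →* G} (hφ : Surjective φ) : Kgrp Γ G ≤ φ.ker :=
  iInf₂_le φ hφ

instance Kgrp_finiteIndex [Group.FG Γ] [Finite G] : (Kgrp Γ G).FiniteIndex := by
  have := finite_monoidHom_of_fg (Γ := Γ) G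
  refine Subgroup.finiteIndex_iInf fun φ => ?_
  by_cases hφ : Surjective φ
  · rw [iInf_pos hφ]; infer_instance
  · rw [iInf_neg hφ]; infer_instance

def surjectiveEquivQuotient (N : Subgroup Γ) [N.Normal]
    (hN : ∀ φ : Γ →* G, Surjective φ → N ≤ φ.ker) (γ : Γ) (g : G) :
    {φ : Γ →* G // φ γ = g ∧ Surjective φ} ≃
      {ψ : Γ ⧸ N →* G // ψ γ = g ∧ Surjective ψ} where
  toFun φ := ⟨QuotientGroup.lift N φ.1 (hN _ φ.2.2), φ.2.1,
    QuotientGroup.lift_surjective_of_surjective _ _ φ.2.2 _⟩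
  invFun ψ := ⟨ψ.1.comp (QuotientGroup.mk' N), ψ.2.1, ψ.2.2.comp (QuotientGroup.mk'_surjective N)⟩
  left_inv _ := rfl
  right_inv _ := Subtype.ext (QuotientGroup.monoidHom_ext N rfl)

lemma sameSurjMeasure_of_mulAut {Q : Type} [Group Q] {q₁ q₂ : Q} (θ : MulAut Q)
    (hθ : θ q₁ = q₂) (G : Type) [Group G] : SameSurjMeasure q₁ q₂ G := fun g =>
  Nat.card_congr <| (MulEquiv.monoidHomCongrLeftEquiv θ).subtypeEquiv fun φ => by
    simp [← hθ]

lemma sameSurjMeasure_of_mulAut_quotient {γ₁ γ₂ : Γ} (θ : MulAut (Γ ⧸ Kgrp Γ G))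
    (hθ : θ γ₁ = γ₂) : SameSurjMeasure γ₁ γ₂ G := fun g => by
  rw [Nat.card_congr (surjectiveEquivQuotient _ (fun _ => Kgrp_le_ker) γ₁ g),
    Nat.card_congr (surjectiveEquivQuotient _ (fun _ => Kgrp_le_ker) γ₂ g)]
  exact sameSurjMeasure_of_mulAut θ hθ G g

lemma Kgrp_le_ker_of_surjective_quotient {ρ : Γ →* Γ ⧸ Kgrp Γ G} (hρ : Surjective ρ) :
    Kgrp Γ G ≤ ρ.ker := by
  intro x hx
  obtain ⟨z, hz⟩ := QuotientGroup.mk_surjective (ρ x)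
  rw [MonoidHom.mem_ker, ← hz, QuotientGroup.eq_one_iff]
  refine Subgroup.mem_iInf.mpr fun φ => Subgroup.mem_iInf.mpr fun hφ => ?_
  let φ' := QuotientGroup.lift _ φ (Kgrp_le_ker hφ)
  have hφ' : Surjective (φ'.comp ρ) :=
    (QuotientGroup.lift_surjective_of_surjective _ φ hφ (Kgrp_le_ker hφ)).comp hρ
  have := Kgrp_le_ker hφ' hx
  rwa [MonoidHom.mem_ker, MonoidHom.comp_apply, ← hz, QuotientGroup.lift_mk] at this

lemma exists_mulAut_of_sameSurjMeasure [Group.FG Γ] [Finite G] {γ₁ γ₂ : Γ}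
    (h : SameSurjMeasure γ₁ γ₂ (Γ ⧸ Kgrp Γ G)) :
    ∃ θ : MulAut (Γ ⧸ Kgrp Γ G), θ γ₁ = γ₂ := by
  have := finite_monoidHom_of_fg (Γ := Γ) (Γ ⧸ Kgrp Γ G)
  have : Nonempty {ρ : Γ →* Γ ⧸ Kgrp Γ G // ρ γ₂ = γ₂ ∧ Surjective ρ} :=
    ⟨⟨QuotientGroup.mk' _, rfl, QuotientGroup.mk'_surjective _⟩⟩
  have hpos : 0 < Nat.card {ρ : Γ →* Γ ⧸ Kgrp Γ G // ρ γ₁ = γ₂ ∧ Surjective ρ} := by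
    rw [h γ₂]; exact Nat.card_pos
  obtain ⟨⟨ρ, hργ, hρ⟩⟩ := (Nat.card_pos_iff.mp hpos).1
  let θ := QuotientGroup.lift _ ρ (Kgrp_le_ker_of_surjective_quotient hρ)
  have hθ : Surjective θ := QuotientGroup.lift_surjective_of_surjective _ _ hρ _
  exact ⟨MulEquiv.ofBijective θ ⟨Finite.injective_iff_surjective.mpr hθ, hθ⟩, hργ⟩

end CharacteristicQuotient

/-- Let `Γ` be a finitely generated group and `γ₁, γ₂ ∈ Γ`.  The following are
equivalent: (i) `γ₁` and `γ₂` induce the same measure on every finite group; (ii)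
for every finite group `G`, with `K = K_Γ(G)`, there is an automorphism of `Γ/K`
mapping `γ₁ K` to `γ₂ K`. -/
theorem sameMeasure_iff_autEquiv_in_char_quotients
    (Γ : Type) [Group Γ] [Group.FG Γ] (γ₁ γ₂ : Γ) :
    (∀ (G : Type) [Group G] [Finite G] (g : G),
        Nat.card {φ : Γ →* G // φ γ₁ = g} = Nat.card {φ : Γ →* G // φ γ₂ = g}) ↔
    (∀ (G : Type) [Group G] [Finite G],
        ∃ θ : MulAut (Γ ⧸ Kgrp Γ G),
          θ (QuotientGroup.mk γ₁) = QuotientGroup.mk γ₂) := by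
  rw [sameHomMeasure_iff_sameSurjMeasure]
  refine ⟨fun h G _ _ => exists_mulAut_of_sameSurjMeasure (h _), fun h G _ _ => ?_⟩
  obtain ⟨θ, hθ⟩ := h G
  exact sameSurjMeasure_of_mulAut_quotient θ hθ
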